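/- For every m ≥ 15, the inequality C(2m, m)^2 ≥ F_{5m+4} holds, where F is the Fibonacci sequence with F_1 = F_2 = 1. -/
import Mathlib


def F : ℕ → ℕ
  | 0 => 0
  | 1 => 1
  | n + 2 => F (n + 1) + F n

lemma F_eq_fib : ∀ n, F n = Nat.fib n
  | 0 => rfl
  | 1 => rfl
  | n + 2 => by rw [F, Nat.fib_add_two, F_eq_fib (n + 1), F_eq_fib n, Nat.add_comm]

lemma fib_add_five (n : ℕ) :
    Nat.fib (n + 5) = 5 * Nat.fib (n + 1) + 3 * Nat.fib n := by
  simp only [show n + 5 = n + 3 + 2 from rfl, show n + 4 = n + 2 + 2 from rfl,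
    show n + 3 = n + 1 + 2 from rfl, Nat.fib_add_two]
  ring

lemma fib_add_six (n : ℕ) :
    Nat.fib (n + 6) = 8 * Nat.fib (n + 1) + 5 * Nat.fib n := by
  rw [show n + 6 = n + 1 + 5 from rfl, fib_add_five, Nat.fib_add_two]
  ring

lemma key : ∀ m, 15 ≤ m →
    Nat.fib (5 * m + 4) ≤ (Nat.centralBinom m) ^ 2 ∧
    Nat.fib (5 * m + 5) ≤ 2 * (Nat.centralBinom m) ^ 2 := by
  intro m hm
  induction m, hm using Nat.le_induction with
  | base =>
      constructor
      · show Nat.fib 79 ≤ (Nat.centralBinom 15) ^ 2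
        decide
      · show Nat.fib 80 ≤ 2 * (Nat.centralBinom 15) ^ 2
        decide
  | succ m hm ih =>
      obtain ⟨h1, h2⟩ := ih
      have hc : (m + 1) * (m + 1).centralBinom = 2 * (2 * m + 1) * m.centralBinom :=
        Nat.succ_mul_centralBinom_succ m
      have hc2 : (m + 1) ^ 2 * ((m + 1).centralBinom) ^ 2
          = (2 * (2 * m + 1)) ^ 2 * (m.centralBinom) ^ 2 := by
        rw [← mul_pow, ← mul_pow, hc]
      have hpos : 0 < (m + 1) ^ 2 := by positivity
      constructor
      · have e : 5 * (m + 1) + 4 = 5 * m + 4 + 5 := by ring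
        rw [e, fib_add_five]
        have : 5 * Nat.fib (5 * m + 4 + 1) + 3 * Nat.fib (5 * m + 4)
            ≤ 13 * (m.centralBinom) ^ 2 := by
          calc 5 * Nat.fib (5 * m + 5) + 3 * Nat.fib (5 * m + 4)
              ≤ 5 * (2 * (m.centralBinom) ^ 2) + 3 * (m.centralBinom) ^ 2 := by
                gcongr
            _ = 13 * (m.centralBinom) ^ 2 := by ring
        refine this.trans ?_
        refine Nat.le_of_mul_le_mul_left ?_ hpos
        rw [hc2]
        have h13 : (m + 1) ^ 2 * 13 ≤ (2 * (2 * m + 1)) ^ 2 := by nlinarith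
        calc (m + 1) ^ 2 * (13 * m.centralBinom ^ 2)
            = ((m + 1) ^ 2 * 13) * m.centralBinom ^ 2 := by ring
          _ ≤ (2 * (2 * m + 1)) ^ 2 * m.centralBinom ^ 2 := by gcongr
      · have e : 5 * (m + 1) + 5 = 5 * m + 4 + 6 := by ring
        rw [e, fib_add_six]
        have : 8 * Nat.fib (5 * m + 4 + 1) + 5 * Nat.fib (5 * m + 4)
            ≤ 21 * (m.centralBinom) ^ 2 := by
          calc 8 * Nat.fib (5 * m + 5) + 5 * Nat.fib (5 * m + 4)
              ≤ 8 * (2 * (m.centralBinom) ^ 2) + 5 * (m.centralBinom) ^ 2 := by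
                gcongr
            _ = 21 * (m.centralBinom) ^ 2 := by ring
        refine this.trans ?_
        refine Nat.le_of_mul_le_mul_left ?_ hpos
        have h21 : (m + 1) ^ 2 * 21 ≤ 2 * (2 * (2 * m + 1)) ^ 2 := by nlinarith
        calc (m + 1) ^ 2 * (21 * m.centralBinom ^ 2)
            = ((m + 1) ^ 2 * 21) * m.centralBinom ^ 2 := by ring
          _ ≤ (2 * (2 * (2 * m + 1)) ^ 2) * m.centralBinom ^ 2 := by gcongr
          _ = (m + 1) ^ 2 * (2 * (m + 1).centralBinom ^ 2) := by rw [mul_left_comm, hc2]; ring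

theorem stmt_7 (m : ℕ) (hm : 15 ≤ m) :
    F (5 * m + 4) ≤ (Nat.choose (2 * m) m) ^ 2 := by
  rw [F_eq_fib]
  exact (key m hm).1
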